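/- Let G be a connected finite graph and ω a 1-form such that the twisted edge adjacency matrix W_{1,ω} has the same spectrum (with multiplicity) as the untwisted edge adjacency matrix W₁. Then the character χ_ω restricted to H₁(G,ℤ) is trivial. -/

import Mathlib

/-- A finite (multi)graph, given by its set of vertices and its set of darts
(oriented edges): each unoriented edge corresponds to a pair `{d, inv d}` of darts. -/
structure Multigraph where
  V : Type
  D : Type
  fintypeV : Fintype V
  fintypeD : Fintype D
  decEqV : DecidableEq V
  decEqD : DecidableEq D
  inv : D → D
  inv_inv : ∀ d, inv (inv d) = d
  inv_ne : ∀ d, inv d ≠ d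
  head : D → V

instance (G : Multigraph) : Fintype G.V := G.fintypeV
instance (G : Multigraph) : Fintype G.D := G.fintypeD
instance (G : Multigraph) : DecidableEq G.V := G.decEqV
instance (G : Multigraph) : DecidableEq G.D := G.decEqD

namespace Multigraph

variable (G : Multigraph)

/-- The initial vertex `d(0)` of an oriented edge. -/
def tail (d : G.D) : G.V := G.head (G.inv d)

/-- Two vertices are adjacent if some oriented edge goes from one to the other. -/
def Adj (v w : G.V) : Prop := ∃ d : G.D, G.tail d = v ∧ G.head d = w

/-- The graph is connected. -/
def Connected : Prop := Nonempty G.V ∧ ∀ v w : G.V, Relation.ReflTransGen G.Adj v w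

/-- `ω` is a 1-form: it changes sign under reversal of orientation. -/
def IsOneForm (ω : G.D → ℝ) : Prop := ∀ d, ω (G.inv d) = - ω d

end Multigraph

namespace Multigraph

variable (G : Multigraph)

/-- The value `χ_ω(d) = e^{2πi ω(d)}` of the character attached to `ω` on a dart. -/
noncomputable def chi (ω : G.D → ℝ) (d : G.D) : ℂ :=
  Complex.exp (2 * Real.pi * Complex.I * (ω d))

/-- `a` feeds into `b`: `a(1) = b(0)` and `b ≠ a⁻¹`. -/
def feeds (a b : G.D) : Prop := G.head a = G.tail b ∧ b ≠ G.inv a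

instance (a b : G.D) : Decidable (G.feeds a b) :=
  inferInstanceAs (Decidable (_ ∧ _))

/-- The (untwisted) edge adjacency matrix `W₁`. -/
noncomputable def W1 : Matrix G.D G.D ℂ :=
  fun a b => if G.feeds a b then 1 else 0

/-- The edge adjacency matrix twisted by `χ_ω`: entry `χ_ω(b)` when `a` feeds into `b`. -/
noncomputable def W1t (ω : G.D → ℝ) : Matrix G.D G.D ℂ :=
  fun a b => if G.feeds a b then G.chi ω b else 0

/-- The vertex adjacency matrix twisted by `χ_ω`. -/
noncomputable def A (ω : G.D → ℝ) : Matrix G.V G.V ℂ :=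
  fun v w => ∑ d ∈ Finset.univ.filter (fun d : G.D => G.tail d = v ∧ G.head d = w),
    G.chi ω d

end Multigraph

namespace Multigraph

variable (G : Multigraph)

/-- The set of integral 1-cycles: `H₁(G,ℤ)`, realized as antisymmetric
integer-valued functions on darts with vanishing boundary at every vertex. -/
def H1set : Set (G.D → ℤ) :=
  {α | (∀ d, α (G.inv d) = - α d) ∧
    ∀ v : G.V, ∑ d ∈ Finset.univ.filter (fun d : G.D => G.head d = v), α d = 0}

/-- The pairing `ω(α)` between a 1-form `ω` and an integral 1-chain `α`. -/
noncomputable def pairingZ (ω : G.D → ℝ) (α : G.D → ℤ) : ℝ :=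
  (1 / 2) * ∑ d : G.D, ω d * (α d : ℝ)

end Multigraph

/-
Equal characteristic polynomials give `tr (W_{1,ω} ^ m) = tr (W₁ ^ m)` for every `m`. The left
side is the sum of `χ_ω` over the closed non-backtracking walks of length `m` and the right side is
their number, so, as `|χ_ω| = 1`, the character is `1` on every closed non-backtracking walk. It
remains to see that these walks generate `H₁(G, ℤ)`: where a cycle `α` is positive on a dart, the
vanishing boundary at its head lets one continue, without backtracking, along a dart where `α` is
again positive; following such continuations closes up into an injective closed walk, and
subtracting it from `α` lowers the total positive mass of `α`.
-/

namespace Matrix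

section Eigenvalues

open Polynomial

variable {n K : Type*} [Fintype n] [DecidableEq n] [Field K] [IsAlgClosed K]

theorem card_roots_charpoly (M : Matrix n n K) :
    Multiset.card M.charpoly.roots = Fintype.card n := by
  rw [IsAlgClosed.card_roots_eq_natDegree, charpoly_natDegree_eq_dim]

theorem det_sub_scalar_eq_prod_roots (M : Matrix n n K) (z : K) :
    (M - scalar n z).det = (M.charpoly.roots.map fun μ => μ - z).prod := by
  have hsplit := C_leadingCoeff_mul_prod_multiset_X_sub_C
    (IsAlgClosed.card_roots_eq_natDegree (p := M.charpoly))
  rw [(charpoly_monic M).leadingCoeff, C_1, one_mul] at hsplit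
  calc (M - scalar n z).det = (-1) ^ Fintype.card n * M.charpoly.eval z := by
        rw [eval_charpoly, ← det_neg, neg_sub]
    _ = (-1) ^ Fintype.card n * (M.charpoly.roots.map fun μ => z - μ).prod := by
        conv_lhs => rw [← hsplit]
        simp [eval_multiset_prod]
    _ = ((M.charpoly.roots.map fun μ => z - μ).map Neg.neg).prod := by
        rw [Multiset.prod_map_neg, Multiset.card_map, card_roots_charpoly]
    _ = _ := by simp [Multiset.map_map]

theorem det_aeval_eq_prod_roots (M : Matrix n n K) (p : K[X]) :
    (aeval M p).det = (M.charpoly.roots.map fun μ => p.eval μ).prod := by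
  have hsplit := C_leadingCoeff_mul_prod_multiset_X_sub_C
    (IsAlgClosed.card_roots_eq_natDegree (p := p))
  set c := p.leadingCoeff
  set ν := p.roots
  rw [← hsplit]
  calc (aeval M (C c * (ν.map fun ζ => X - C ζ).prod)).det
      = c ^ Fintype.card n * (ν.map fun ζ => (M - scalar n ζ).det).prod := by
        let φ : K[X] →* K := detMonoidHom.comp (aeval M : K[X] →ₐ[K] Matrix n n K).toMonoidHom
        have hφ : ∀ q, φ q = (aeval M q).det := fun _ => rfl
        rw [map_mul, aeval_C, Algebra.algebraMap_eq_smul_one, smul_mul_assoc, one_mul, det_smul,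
          ← hφ, map_multiset_prod, Multiset.map_map]
        simp [φ, algebraMap_eq_diagonal, Function.comp_def, Pi.algebraMap_def]
    _ = _ := by
        simp only [det_sub_scalar_eq_prod_roots, eval_mul, eval_C, eval_multiset_prod,
          Multiset.map_map, Function.comp_def, eval_sub, eval_X, Multiset.prod_map_mul,
          Multiset.map_const', Multiset.prod_replicate, card_roots_charpoly]
        rw [Multiset.prod_map_prod_map]

theorem charpoly_pow_eq_prod_roots (M : Matrix n n K) (k : ℕ) :
    (M ^ k).charpoly = (M.charpoly.roots.map fun μ => X - C (μ ^ k)).prod := by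
  refine Polynomial.funext fun x => ?_
  have : scalar n x - M ^ k = aeval M (C x - X ^ k) := by simp [algebraMap_eq_diagonal]
  rw [eval_charpoly, this, det_aeval_eq_prod_roots, eval_multiset_prod, Multiset.map_map]
  simp

theorem trace_pow_eq_sum_roots_pow (M : Matrix n n K) (k : ℕ) :
    (M ^ k).trace = (M.charpoly.roots.map (· ^ k)).sum := by
  have := roots_multiset_prod_X_sub_C (M.charpoly.roots.map (· ^ k))
  rw [Multiset.map_map] at this
  rw [trace_eq_sum_roots_charpoly, charpoly_pow_eq_prod_roots]
  exact congrArg Multiset.sum this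

theorem trace_pow_eq_of_charpoly_eq {A B : Matrix n n K} (h : A.charpoly = B.charpoly) (k : ℕ) :
    (A ^ k).trace = (B ^ k).trace := by
  rw [trace_pow_eq_sum_roots_pow, trace_pow_eq_sum_roots_pow, h]

end Eigenvalues

section Walks

variable {ι R : Type*} [Fintype ι] [DecidableEq ι] [CommSemiring R]

/-- `Fin.cons a f` is the path `a, f 0, …, f (k - 1)`. -/
theorem pow_apply_eq_sum_paths (W : Matrix ι ι R) (k : ℕ) (a b : ι) :
    (W ^ k) a b = ∑ f : Fin k → ι, if (Fin.cons a f : Fin (k + 1) → ι) (Fin.last k) = b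
      then ∏ i : Fin k, W ((Fin.cons a f : Fin (k + 1) → ι) i.castSucc) (f i) else 0 := by
  induction k generalizing a with
  | zero => simp [one_apply]
  | succ k ih =>
    rw [pow_succ', mul_apply, ← (Fin.consEquiv fun _ => ι).sum_comp, Fintype.sum_prod_type]
    refine Finset.sum_congr rfl fun c _ => ?_
    rw [ih, Finset.mul_sum]
    refine Finset.sum_congr rfl fun f _ => ?_
    simp [Fin.prod_univ_succ, Fin.cons_last]

theorem trace_pow_succ_eq_sum_cycles (W : Matrix ι ι R) (k : ℕ) :
    (W ^ (k + 1)).trace =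
      ∑ f : Fin (k + 1) → ι, ∏ i, W (f i) (f (finRotate (k + 1) i)) := by
  have hpred : ∀ f : Fin (k + 1) → ι, ∀ j : Fin (k + 1),
      (Fin.cons (f (Fin.last k)) f : Fin (k + 2) → ι) (finRotate _ j).castSucc = f j := by
    intro f j
    refine Fin.lastCases ?_ (fun m => ?_) j
    · simp
    · rw [finRotate_apply, Fin.coeSucc_eq_succ, ← Fin.succ_castSucc, Fin.cons_succ]
  simp_rw [trace, diag_apply, pow_apply_eq_sum_paths]
  rw [Finset.sum_comm]
  refine Finset.sum_congr rfl fun f _ => ?_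
  simp only [Fin.cons_last, Finset.sum_ite_eq, Finset.mem_univ, if_true]
  rw [← Equiv.prod_comp (finRotate (k + 1))]
  simp only [hpred]

end Walks

end Matrix

open ComplexOrder in
theorem Complex.eq_one_of_sum_eq_card {ι : Type*} {s : Finset ι} {z : ι → ℂ}
    (hz : ∀ i ∈ s, ‖z i‖ ≤ 1) (hsum : ∑ i ∈ s, z i = s.card) : ∀ i ∈ s, z i = 1 := by
  have hre_le : ∀ i ∈ s, (z i).re ≤ 1 := fun i hi => (re_le_norm _).trans (hz i hi)
  have hre : ∀ i ∈ s, (z i).re = 1 := by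
    have hdefect : ∑ i ∈ s, (1 - (z i).re) = 0 := by
      have := congrArg re hsum
      simp only [re_sum, natCast_re] at this
      simp [Finset.sum_sub_distrib, this]
    intro i hi
    linarith [(Finset.sum_eq_zero_iff_of_nonneg fun j hj => sub_nonneg.2 (hre_le j hj)).1
      hdefect i hi]
  intro i hi
  have hnonneg : 0 ≤ z i := re_eq_norm.1 (le_antisymm (re_le_norm _) (hre i hi ▸ hz i hi))
  exact Complex.ext (hre i hi) (nonneg_iff.1 hnonneg).2.symm

theorem Function.exists_mem_periodicPts {α : Type*} [Finite α] (s : α → α) (x : α) :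
    ∃ y, y ∈ periodicPts s := by
  obtain ⟨m, n, hmn, hne⟩ : ∃ m n, s^[m] x = s^[n] x ∧ m ≠ n := by
    simpa [Injective] using not_injective_infinite_finite (s^[·] x)
  wlog hlt : m < n generalizing m n
  · exact this n m hmn.symm hne.symm (by omega)
  refine ⟨s^[m] x, mk_mem_periodicPts (n := n - m) (by omega) ?_⟩
  rw [IsPeriodicPt, IsFixedPt, ← iterate_add_apply, Nat.sub_add_cancel hlt.le, hmn]

theorem Function.exists_injective_cycle {α : Type*} [Finite α] [Nonempty α] (s : α → α) :
    ∃ (n : ℕ) (c : Fin (n + 1) → α), Injective c ∧ ∀ i, c (finRotate _ i) = s (c i) := by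
  obtain ⟨y, hy⟩ := exists_mem_periodicPts s (Classical.arbitrary α)
  obtain ⟨n, hn⟩ : ∃ n, minimalPeriod s y = n + 1 :=
    Nat.exists_eq_add_one.2 (minimalPeriod_pos_of_mem_periodicPts hy)
  refine ⟨n, fun i => s^[i] y, fun i j hij => Fin.ext ?_, fun i => ?_⟩
  · exact iterate_injOn_Iio_minimalPeriod (by simp [hn, i.is_lt]) (by simp [hn, j.is_lt]) hij
  · show s^[(finRotate _ i : ℕ)] y = s (s^[i] y)
    rw [coe_finRotate]
    split_ifs with hi
    · rw [hi, Fin.val_last, iterate_zero_apply, ← iterate_succ_apply' s n, Nat.succ_eq_add_one,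
        ← hn, iterate_minimalPeriod]
    · exact iterate_succ_apply' s i y

namespace Multigraph

variable {G : Multigraph}

theorem eq_inv_comm {a b : G.D} : a = G.inv b ↔ G.inv a = b :=
  ⟨fun h => h ▸ G.inv_inv b, fun h => h ▸ (G.inv_inv a).symm⟩

theorem sub_mem_H1set {α β : G.D → ℤ} (hα : α ∈ G.H1set) (hβ : β ∈ G.H1set) :
    α - β ∈ G.H1set :=
  ⟨fun d => by simp only [Pi.sub_apply, hα.1 d, hβ.1 d]; ring, fun v => by
    simp [Finset.sum_sub_distrib, hα.2 v, hβ.2 v]⟩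

theorem pairingZ_add (ω : G.D → ℝ) (α β : G.D → ℤ) :
    G.pairingZ ω (α + β) = G.pairingZ ω α + G.pairingZ ω β := by
  simp only [pairingZ, Pi.add_apply, Int.cast_add, mul_add, Finset.sum_add_distrib]

theorem chi_zero (d : G.D) : G.chi 0 d = 1 := by
  simp [chi]

theorem norm_chi (ω : G.D → ℝ) (d : G.D) : ‖G.chi ω d‖ = 1 := by
  rw [chi, show 2 * Real.pi * Complex.I * (ω d : ℂ) = ((2 * Real.pi * ω d : ℝ) : ℂ) * Complex.I by
    push_cast; ring]
  exact Complex.norm_exp_ofReal_mul_I _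

theorem exists_feeds_pos {α : G.D → ℤ} (hα : α ∈ G.H1set) {d : G.D} (hd : 0 < α d) :
    ∃ e, G.feeds d e ∧ 0 < α e := by
  obtain ⟨e, he, hneg⟩ : ∃ e ∈ Finset.univ.filter (fun e => G.head e = G.head d), α e < 0 := by
    by_contra! h
    have := Finset.sum_pos' h ⟨d, by simp, hd⟩
    rw [hα.2] at this
    exact this.false
  refine ⟨G.inv e, ⟨by simp_all [tail, G.inv_inv], fun hed => ?_⟩, by rw [hα.1]; omega⟩
  rw [← eq_inv_comm, G.inv_inv] at hed
  subst hed
  omega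

variable (G) in
def IsClosedNonBacktrackingWalk {m : ℕ} (f : Fin m → G.D) : Prop :=
  ∀ i, G.feeds (f i) (f (finRotate m i))

instance {m : ℕ} : DecidablePred (G.IsClosedNonBacktrackingWalk (m := m)) :=
  fun _ => inferInstanceAs (Decidable (∀ _, _))

variable (G) in
def walkChain {m : ℕ} (f : Fin m → G.D) (d : G.D) : ℤ :=
  ∑ t, ((if f t = d then 1 else 0) - if f t = G.inv d then 1 else 0)

theorem walkChain_mem_H1set {m : ℕ} {f : Fin m → G.D}
    (hf : ∀ i, G.head (f i) = G.tail (f (finRotate m i))) : G.walkChain f ∈ G.H1set := by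
  refine ⟨fun d => by simp [walkChain, G.inv_inv], fun v => ?_⟩
  have hrot : ∑ t, (if G.head (f t) = v then (1 : ℤ) else 0) =
      ∑ t, (if G.tail (f t) = v then (1 : ℤ) else 0) := by
    simp only [hf]
    exact Equiv.sum_comp (finRotate m) fun t => if G.tail (f t) = v then (1 : ℤ) else 0
  simp only [walkChain, eq_inv_comm]
  rw [Finset.sum_comm]
  simp only [Finset.sum_sub_distrib, Finset.sum_ite_eq, Finset.mem_filter, Finset.mem_univ,
    true_and]
  rw [hrot, sub_eq_zero]
  rfl

theorem pairingZ_walkChain {ω : G.D → ℝ} (hω : G.IsOneForm ω) {m : ℕ} (f : Fin m → G.D) :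
    G.pairingZ ω (G.walkChain f) = ∑ t, ω (f t) := by
  simp only [pairingZ, walkChain, eq_inv_comm]
  push_cast
  simp only [Finset.mul_sum, mul_sub, mul_ite, mul_one, mul_zero]
  rw [Finset.sum_comm]
  simp only [Finset.sum_sub_distrib, Finset.sum_ite_eq, Finset.mem_univ, if_true, hω _]
  rw [← Finset.sum_sub_distrib]
  exact Finset.sum_congr rfl fun _ _ => by ring

theorem walkChain_apply_of_injective {m : ℕ} {f : Fin m → G.D} (hf : Function.Injective f)
    (d : G.D) : G.walkChain f d =
      (if ∃ t, f t = d then 1 else 0) - if ∃ t, f t = G.inv d then 1 else 0 := by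
  have hcount : ∀ e, ∑ t, (if f t = e then (1 : ℤ) else 0) = if ∃ t, f t = e then 1 else 0 := by
    intro e
    split_ifs with he
    · obtain ⟨t, rfl⟩ := he
      simp [hf.eq_iff]
    · simp_all
  rw [walkChain, Finset.sum_sub_distrib, hcount, hcount]

theorem sum_toNat_sub_walkChain_lt {α : G.D → ℤ} (hα : ∀ d, α (G.inv d) = -α d) {n : ℕ}
    {f : Fin (n + 1) → G.D} (hf : Function.Injective f) (hpos : ∀ t, 0 < α (f t)) :
    ∑ d, (α d - G.walkChain f d).toNat < ∑ d, (α d).toNat := by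
  have hsupp : ∀ d, (∃ t, f t = d) → 0 < α d := by
    rintro _ ⟨t, rfl⟩
    exact hpos t
  refine Finset.sum_lt_sum (fun d _ => ?_) ⟨f 0, Finset.mem_univ _, ?_⟩
  · rw [walkChain_apply_of_injective hf]
    split_ifs with hd hi hi
    · linarith [hsupp d hd, hα d ▸ hsupp _ hi]
    · omega
    · have := hα d ▸ hsupp _ hi
      omega
    · omega
  · rw [walkChain_apply_of_injective hf, if_pos ⟨0, rfl⟩]
    split_ifs with hi
    · linarith [hpos 0, hα (f 0) ▸ hsupp _ hi]
    · have := hpos 0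
      omega

theorem H1set_subset_closure_walkChain :
    G.H1set ⊆ AddSubmonoid.closure
      {γ | ∃ (m : ℕ) (f : Fin m → G.D), G.IsClosedNonBacktrackingWalk f ∧ G.walkChain f = γ} := by
  intro α hα
  induction hN : ∑ d, (α d).toNat using Nat.strong_induction_on generalizing α with
  | _ N ih =>
  by_cases hnonpos : ∀ d, α d ≤ 0
  · have hzero : α = 0 := funext fun d => by
      have := hnonpos (G.inv d)
      rw [hα.1] at this
      simpa using le_antisymm (hnonpos d) (by omega)
    rw [hzero]
    exact zero_mem _
  push Not at hnonpos
  obtain ⟨d₀, hd₀⟩ := hnonpos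
  have : Nonempty {d // 0 < α d} := ⟨⟨d₀, hd₀⟩⟩
  choose next hnext using fun s : {d // 0 < α d} => exists_feeds_pos hα s.2
  obtain ⟨n, c, hc_inj, hc⟩ := Function.exists_injective_cycle
    fun s : {d // 0 < α d} => (⟨next s, (hnext s).2⟩ : {d // 0 < α d})
  let f : Fin (n + 1) → G.D := fun i => (c i).1
  have hwalk : G.IsClosedNonBacktrackingWalk f := fun i => by
    simp only [f, hc]
    exact (hnext (c i)).1
  have hcycle : G.walkChain f ∈ G.H1set := walkChain_mem_H1set fun i => (hwalk i).1
  rw [← sub_add_cancel α (G.walkChain f)]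
  refine add_mem (ih _ ?_ (sub_mem_H1set hα hcycle) rfl)
    (AddSubmonoid.subset_closure ⟨_, f, hwalk, rfl⟩)
  rw [← hN]
  exact sum_toNat_sub_walkChain_lt hα.1 (Subtype.val_injective.comp hc_inj) fun t => (c t).2

theorem W1_eq_W1t_zero : G.W1 = G.W1t 0 := by
  ext a b
  simp [W1, W1t, chi_zero]

theorem prod_W1t_cycle (ω : G.D → ℝ) {m : ℕ} (f : Fin m → G.D) :
    ∏ i, G.W1t ω (f i) (f (finRotate m i)) =
      if G.IsClosedNonBacktrackingWalk f then ∏ i, G.chi ω (f i) else 0 := by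
  simp only [W1t, Finset.prod_ite_zero, Finset.mem_univ, true_implies, IsClosedNonBacktrackingWalk]
  rw [Equiv.prod_comp (finRotate m) fun i => G.chi ω (f i)]
  congr

theorem trace_W1t_pow_succ (ω : G.D → ℝ) (k : ℕ) :
    (G.W1t ω ^ (k + 1)).trace =
      ∑ f ∈ Finset.univ.filter (G.IsClosedNonBacktrackingWalk (m := k + 1)),
        ∏ i, G.chi ω (f i) := by
  simp only [Matrix.trace_pow_succ_eq_sum_cycles, prod_W1t_cycle, Finset.sum_filter]

theorem prod_chi_eq_one_of_charpoly_eq {ω : G.D → ℝ} (h : (G.W1t ω).charpoly = G.W1.charpoly)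
    {m : ℕ} {f : Fin m → G.D} (hf : G.IsClosedNonBacktrackingWalk f) : ∏ t, G.chi ω (f t) = 1 := by
  cases m with
  | zero => simp
  | succ k =>
    have htr := Matrix.trace_pow_eq_of_charpoly_eq h (k + 1)
    rw [W1_eq_W1t_zero, trace_W1t_pow_succ, trace_W1t_pow_succ] at htr
    simp only [chi_zero, Finset.prod_const_one, Finset.sum_const, nsmul_eq_mul, mul_one] at htr
    refine Complex.eq_one_of_sum_eq_card (fun g _ => ?_) htr f (by simpa using hf)
    simp [norm_chi]

theorem exp_pairingZ_walkChain {ω : G.D → ℝ} (hω : G.IsOneForm ω) {m : ℕ} (f : Fin m → G.D) :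
    Complex.exp (2 * Real.pi * Complex.I * (G.pairingZ ω (G.walkChain f) : ℝ)) =
      ∏ t, G.chi ω (f t) := by
  rw [pairingZ_walkChain hω]
  push_cast
  rw [Finset.mul_sum, Complex.exp_sum]
  rfl

end Multigraph

open Multigraph

theorem isospectral_implies_trivial_character_general (G : Multigraph)
    (ω : G.D → ℝ) (hω : G.IsOneForm ω)
    (h : (G.W1t ω).charpoly = G.W1.charpoly) :
    ∀ α ∈ G.H1set, Complex.exp (2 * Real.pi * Complex.I * (G.pairingZ ω α : ℝ)) = 1 := by
  intro α hα
  replace hα := H1set_subset_closure_walkChain hα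
  induction hα using AddSubmonoid.closure_induction with
  | mem _ hγ =>
    obtain ⟨m, f, hf, rfl⟩ := hγ
    rw [exp_pairingZ_walkChain hω]
    exact prod_chi_eq_one_of_charpoly_eq h hf
  | zero => simp [pairingZ]
  | add α β _ _ hα hβ =>
    rw [pairingZ_add]
    push_cast
    rw [mul_add, Complex.exp_add, hα, hβ, one_mul]

/-- if the twisted edge adjacency matrix `W_{1,ω}` has the same
spectrum, with multiplicity, as `W₁` (equivalently, the same characteristic
polynomial), then the character `χ_ω` restricted to `H₁(G,ℤ)` is trivial. -/
theorem isospectral_implies_trivial_character (G : Multigraph) (hG : G.Connected)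
    (ω : G.D → ℝ) (hω : G.IsOneForm ω)
    (h : (G.W1t ω).charpoly = G.W1.charpoly) :
    ∀ α ∈ G.H1set, Complex.exp (2 * Real.pi * Complex.I * (G.pairingZ ω α : ℝ)) = 1 :=
  isospectral_implies_trivial_character_general G ω hω h
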